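/- In the global model with local reward R : X × A × X → ℝ, for every local policy μ and every external policy η, the expected total local reward satisfies E[Σ_{t=0}^{h−1} R(x^t, a^t, x^{t+1})] ≤ V̂^M, where V̂^M := max_{a∈A} Σ_{x∈X} b0_X(x)·Q̂_h(x,a) and Q̂ is defined by Q̂_0(x,a) = 0 and Q̂_{k+1}(x,a) = max_{u∈U} Σ_{x'=(x'l,x'n)∈X} Pl(x'l|x,a)·Pn(x'n|x,a,u)·[R(x,a,x') + max_{a'∈A} Q̂_k(x',a')]. In particular, the locally-optimal value of the sub-problem (the supremum of this expectation over all policies (μ,η)) is at most the influence-optimistic Q-MMDP upper bound V̂^M. -/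
import Mathlib


open Finset

section GlobalModel

variable {Xl Xn Y A E O U : Type*}
  [Fintype Xl] [Nonempty Xl] [Fintype Xn] [Nonempty Xn] [Fintype Y] [Nonempty Y]
  [Fintype A] [Nonempty A] [Fintype E] [Nonempty E]
  [Fintype O] [Nonempty O] [Fintype U] [Nonempty U]

/-- Expected total local reward `E[∑_{t<k} R(x^t, a^t, x^{t+1})]` in the global model,
obtained by backward recursion over the remaining horizon `k`: local actions are chosen
by the local policy `μ` from the local observation history `obs`, external actions by
the external policy `η` from the entire history so far (current state `s` together with
the list `hist` of all past states, joint actions and observations); the global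
transition probability is `Pl · Pn(·|σ) · G` and local observations have probability
`Ω`. -/
noncomputable def expTotalR (Pl : Xl → (Xl × Xn) → A → ℝ)
    (Pn : Xn → (Xl × Xn) → A → U → ℝ)
    (G : Y → ((Xl × Xn) × Y) → A × E → (Xl × Xn) → ℝ)
    (σ : ((Xl × Xn) × Y) → A × E → U) (Ω : O → A → (Xl × Xn) → ℝ)
    (R : (Xl × Xn) → A → (Xl × Xn) → ℝ)
    (μ : List O → A)
    (η : ((Xl × Xn) × Y) → List (((Xl × Xn) × Y) × (A × E) × O) → E) :
    ℕ → ((Xl × Xn) × Y) → List O → List (((Xl × Xn) × Y) × (A × E) × O) → ℝ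
  | 0 => fun _ _ _ => 0
  | k + 1 => fun s obs hist =>
      ∑ s' : (Xl × Xn) × Y, ∑ o : O,
        Pl s'.1.1 s.1 (μ obs) * Pn s'.1.2 s.1 (μ obs) (σ s (μ obs, η s hist)) *
          G s'.2 s (μ obs, η s hist) s'.1 * Ω o (μ obs) s'.1 *
          (R s.1 (μ obs) s'.1 +
            expTotalR Pl Pn G σ Ω R μ η k s' (obs ++ [o])
              (hist ++ [(s, (μ obs, η s hist), o)]))

/-- Influence-optimistic Q-MMDP values `Q̂_k(x,a)`. -/
noncomputable def Qhat (Pl : Xl → (Xl × Xn) → A → ℝ) (Pn : Xn → (Xl × Xn) → A → U → ℝ)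
    (R : (Xl × Xn) → A → (Xl × Xn) → ℝ) :
    ℕ → (Xl × Xn) → A → ℝ
  | 0 => fun _ _ => 0
  | k + 1 => fun x a =>
      Finset.univ.sup' Finset.univ_nonempty (fun u : U =>
        ∑ x' : Xl × Xn, Pl x'.1 x a * Pn x'.2 x a u *
          (R x a x' +
            Finset.univ.sup' Finset.univ_nonempty (fun a' : A => Qhat Pl Pn R k x' a')))

lemma expTotalR_le_Qhat
    (Pl : Xl → (Xl × Xn) → A → ℝ) (Pn : Xn → (Xl × Xn) → A → U → ℝ)
    (G : Y → ((Xl × Xn) × Y) → A × E → (Xl × Xn) → ℝ)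
    (σ : ((Xl × Xn) × Y) → A × E → U) (Ω : O → A → (Xl × Xn) → ℝ)
    (R : (Xl × Xn) → A → (Xl × Xn) → ℝ)
    (hPl0 : ∀ x'l x a, 0 ≤ Pl x'l x a)
    (hPn0 : ∀ x'n x a u, 0 ≤ Pn x'n x a u)
    (hG0 : ∀ y' s ae x', 0 ≤ G y' s ae x') (hG1 : ∀ s ae x', ∑ y' : Y, G y' s ae x' = 1)
    (hΩ0 : ∀ o a x', 0 ≤ Ω o a x') (hΩ1 : ∀ a x', ∑ o : O, Ω o a x' = 1)
    (μ : List O → A)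
    (η : ((Xl × Xn) × Y) → List (((Xl × Xn) × Y) × (A × E) × O) → E) :
    ∀ (k : ℕ) (s : (Xl × Xn) × Y) (obs : List O)
      (hist : List (((Xl × Xn) × Y) × (A × E) × O)),
      expTotalR Pl Pn G σ Ω R μ η k s obs hist ≤ Qhat Pl Pn R k s.1 (μ obs) := by
  intro k
  induction k with
  | zero => intro s obs hist; simp [expTotalR, Qhat]
  | succ k ih =>
    intro s obs hist
    set a := μ obs with ha
    set e := η s hist with he
    set u := σ s (a, e) with hu
    have key :
        expTotalR Pl Pn G σ Ω R μ η (k + 1) s obs hist ≤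
          ∑ x' : Xl × Xn, Pl x'.1 s.1 a * Pn x'.2 s.1 a u *
            (R s.1 a x' +
              Finset.univ.sup' Finset.univ_nonempty
                (fun a' : A => Qhat Pl Pn R k x' a')) := by
      rw [expTotalR]
      calc
        (∑ s' : (Xl × Xn) × Y, ∑ o : O,
            Pl s'.1.1 s.1 a * Pn s'.1.2 s.1 a u * G s'.2 s (a, e) s'.1 * Ω o a s'.1 *
              (R s.1 a s'.1 +
                expTotalR Pl Pn G σ Ω R μ η k s' (obs ++ [o])
                  (hist ++ [(s, (a, e), o)])))
          ≤ ∑ s' : (Xl × Xn) × Y, ∑ o : O,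
              Pl s'.1.1 s.1 a * Pn s'.1.2 s.1 a u * G s'.2 s (a, e) s'.1 * Ω o a s'.1 *
                (R s.1 a s'.1 +
                  Finset.univ.sup' Finset.univ_nonempty
                    (fun a' : A => Qhat Pl Pn R k s'.1 a')) := by
            gcongr with s' _ o _
            · exact mul_nonneg (mul_nonneg (mul_nonneg (hPl0 _ _ _) (hPn0 _ _ _ _))
                (hG0 _ _ _ _)) (hΩ0 _ _ _)
            · exact (ih _ _ _).trans (Finset.le_sup' _ (Finset.mem_univ _))
        _ = ∑ s' : (Xl × Xn) × Y,
              Pl s'.1.1 s.1 a * Pn s'.1.2 s.1 a u * G s'.2 s (a, e) s'.1 *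
                (R s.1 a s'.1 +
                  Finset.univ.sup' Finset.univ_nonempty
                    (fun a' : A => Qhat Pl Pn R k s'.1 a')) := by
            refine Finset.sum_congr rfl fun s' _ => ?_
            rw [show (∑ o : O,
                Pl s'.1.1 s.1 a * Pn s'.1.2 s.1 a u * G s'.2 s (a, e) s'.1 * Ω o a s'.1 *
                  (R s.1 a s'.1 +
                    Finset.univ.sup' Finset.univ_nonempty
                      (fun a' : A => Qhat Pl Pn R k s'.1 a'))) =
                (∑ o : O, Ω o a s'.1) *
                  (Pl s'.1.1 s.1 a * Pn s'.1.2 s.1 a u * G s'.2 s (a, e) s'.1 *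
                    (R s.1 a s'.1 +
                      Finset.univ.sup' Finset.univ_nonempty
                        (fun a' : A => Qhat Pl Pn R k s'.1 a'))) from by
              rw [Finset.sum_mul]; exact Finset.sum_congr rfl fun o _ => by ring]
            rw [hΩ1]; ring
        _ = ∑ x' : Xl × Xn, Pl x'.1 s.1 a * Pn x'.2 s.1 a u *
              (R s.1 a x' +
                Finset.univ.sup' Finset.univ_nonempty
                  (fun a' : A => Qhat Pl Pn R k x' a')) := by
            rw [Fintype.sum_prod_type]
            refine Finset.sum_congr rfl fun x' _ => ?_
            rw [show (∑ y' : Y,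
                Pl x'.1 s.1 a * Pn x'.2 s.1 a u * G y' s (a, e) x' *
                  (R s.1 a x' +
                    Finset.univ.sup' Finset.univ_nonempty
                      (fun a' : A => Qhat Pl Pn R k x' a'))) =
                (∑ y' : Y, G y' s (a, e) x') *
                  (Pl x'.1 s.1 a * Pn x'.2 s.1 a u *
                    (R s.1 a x' +
                      Finset.univ.sup' Finset.univ_nonempty
                        (fun a' : A => Qhat Pl Pn R k x' a'))) from by
              rw [Finset.sum_mul]; exact Finset.sum_congr rfl fun y' _ => by ring]
            rw [hG1]; ring
    refine key.trans ?_
    rw [show Qhat Pl Pn R (k + 1) s.1 a =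
        Finset.univ.sup' Finset.univ_nonempty (fun u' : U =>
          ∑ x' : Xl × Xn, Pl x'.1 s.1 a * Pn x'.2 s.1 a u' *
            (R s.1 a x' +
              Finset.univ.sup' Finset.univ_nonempty
                (fun a' : A => Qhat Pl Pn R k x' a'))) from rfl]
    exact Finset.le_sup' (fun u' : U =>
          ∑ x' : Xl × Xn, Pl x'.1 s.1 a * Pn x'.2 s.1 a u' *
            (R s.1 a x' +
              Finset.univ.sup' Finset.univ_nonempty
                (fun a' : A => Qhat Pl Pn R k x' a'))) (Finset.mem_univ u)

/-- in the global model, for every local policy `μ` and every external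
policy `η`, the expected total local reward is at most the influence-optimistic
Q-MMDP upper bound `V̂^M = max_a ∑_x b0_X(x) · Q̂_h(x,a)`; in particular the
locally-optimal value of the sub-problem is at most `V̂^M`. -/
theorem expTotalR_le_IO_QMMDP
    (Pl : Xl → (Xl × Xn) → A → ℝ) (Pn : Xn → (Xl × Xn) → A → U → ℝ)
    (G : Y → ((Xl × Xn) × Y) → A × E → (Xl × Xn) → ℝ)
    (σ : ((Xl × Xn) × Y) → A × E → U) (Ω : O → A → (Xl × Xn) → ℝ)
    (R : (Xl × Xn) → A → (Xl × Xn) → ℝ)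
    (hPl0 : ∀ x'l x a, 0 ≤ Pl x'l x a) (hPl1 : ∀ x a, ∑ x'l : Xl, Pl x'l x a = 1)
    (hPn0 : ∀ x'n x a u, 0 ≤ Pn x'n x a u) (hPn1 : ∀ x a u, ∑ x'n : Xn, Pn x'n x a u = 1)
    (hG0 : ∀ y' s ae x', 0 ≤ G y' s ae x') (hG1 : ∀ s ae x', ∑ y' : Y, G y' s ae x' = 1)
    (hΩ0 : ∀ o a x', 0 ≤ Ω o a x') (hΩ1 : ∀ a x', ∑ o : O, Ω o a x' = 1)
    (b0 : (Xl × Xn) × Y → ℝ) (hb00 : ∀ s, 0 ≤ b0 s) (hb01 : ∑ s : (Xl × Xn) × Y, b0 s = 1)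
    (h : ℕ) (μ : List O → A)
    (η : ((Xl × Xn) × Y) → List (((Xl × Xn) × Y) × (A × E) × O) → E) :
    ∑ s : (Xl × Xn) × Y, b0 s * expTotalR Pl Pn G σ Ω R μ η h s [] [] ≤
      Finset.univ.sup' Finset.univ_nonempty
        (fun a : A => ∑ x : Xl × Xn, (∑ y : Y, b0 (x, y)) * Qhat Pl Pn R h x a) := by
  calc
    ∑ s : (Xl × Xn) × Y, b0 s * expTotalR Pl Pn G σ Ω R μ η h s [] []
      ≤ ∑ s : (Xl × Xn) × Y, b0 s * Qhat Pl Pn R h s.1 (μ []) := by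
        gcongr with s _
        · exact hb00 s
        · exact expTotalR_le_Qhat Pl Pn G σ Ω R hPl0 hPn0 hG0 hG1 hΩ0 hΩ1 μ η h s [] []
    _ = ∑ x : Xl × Xn, (∑ y : Y, b0 (x, y)) * Qhat Pl Pn R h x (μ []) := by
        rw [Fintype.sum_prod_type]
        exact Finset.sum_congr rfl fun x _ => by rw [Finset.sum_mul]
    _ ≤ Finset.univ.sup' Finset.univ_nonempty
          (fun a : A => ∑ x : Xl × Xn, (∑ y : Y, b0 (x, y)) * Qhat Pl Pn R h x a) :=
        Finset.le_sup'
          (fun a : A => ∑ x : Xl × Xn, (∑ y : Y, b0 (x, y)) * Qhat Pl Pn R h x a)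
          (Finset.mem_univ (μ []))

end GlobalModel
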